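/- arXiv:math/0210338 — 6 statements merged into one kernel-verified Lean document; each statement's English description precedes it below -/
import Mathlib

section
/- Every tournament on 2^(k-1) vertices contains a transitive subtournament on k vertices. -/
/-- A tournament: irreflexive, and between any two distinct vertices exactly one directed edge. -/
def IsTournament {V : Type*} (T : V → V → Prop) : Prop :=
  (∀ v, ¬ T v v) ∧ ∀ u v : V, u ≠ v → (T u v ↔ ¬ T v u)

/-- `T` contains a transitive subtournament on `k` vertices. -/
def HasTT {V : Type*} (k : ℕ) (T : V → V → Prop) : Prop :=
  ∃ e : Fin k → V, Function.Injective e ∧ ∀ i j : Fin k, i < j → T (e i) (e j)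

lemma tt_aux {V : Type*} [DecidableEq V] (T : V → V → Prop) [DecidableRel T]
    (hT : IsTournament T) :
    ∀ k (s : Finset V), 2 ^ k ≤ s.card →
      ∃ e : Fin (k + 1) → V, (∀ i, e i ∈ s) ∧ ∀ i j, i < j → T (e i) (e j) := by
  intro k
  induction k with
  | zero =>
    intro s hs
    obtain ⟨x, hx⟩ := Finset.card_pos.mp (by omega : 0 < s.card)
    refine ⟨fun _ => x, fun _ => hx, fun i j hij => ?_⟩
    exact absurd hij (by omega)
  | succ k ih =>
    intro s hs
    obtain ⟨v, hv⟩ := Finset.card_pos.mp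
      (lt_of_lt_of_le (by positivity) hs)
    set A := (s.erase v).filter (fun u => T v u) with hA
    set B := (s.erase v).filter (fun u => T u v) with hB
    have hAB : (s.erase v).card ≤ A.card + B.card := by
      have hsub : s.erase v ⊆ A ∪ B := by
        intro u hu
        have hne : u ≠ v := Finset.ne_of_mem_erase hu
        rcases Classical.em (T v u) with h | h
        · exact Finset.mem_union_left _ (Finset.mem_filter.mpr ⟨hu, h⟩)
        · exact Finset.mem_union_right _
            (Finset.mem_filter.mpr ⟨hu, (hT.2 u v hne).mpr h⟩)
      calc (s.erase v).card ≤ (A ∪ B).card := Finset.card_le_card hsub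
        _ ≤ A.card + B.card := Finset.card_union_le _ _
    have hcard : 2 ^ k ≤ A.card ∨ 2 ^ k ≤ B.card := by
      rw [Finset.card_erase_of_mem hv] at hAB
      have h2 : 2 ^ (k + 1) = 2 ^ k * 2 := pow_succ 2 k
      omega
    rcases hcard with h | h
    · obtain ⟨e, he, hmono⟩ := ih A h
      refine ⟨Fin.cons v e, ?_, ?_⟩
      · intro i
        induction i using Fin.cases with
        | zero => simpa using hv
        | succ i' =>
          simpa using Finset.mem_of_mem_erase (Finset.mem_of_mem_filter _ (he i'))
      · intro i j hij
        induction j using Fin.cases with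
        | zero => exact absurd hij (Fin.not_lt_zero i)
        | succ j' =>
          induction i using Fin.cases with
          | zero => simpa using (Finset.mem_filter.mp (he j')).2
          | succ i' =>
            have hij' : i' < j' := by
              rw [Fin.lt_def] at hij ⊢
              simpa using hij
            simpa using hmono i' j' hij'
    · obtain ⟨e, he, hmono⟩ := ih B h
      refine ⟨Fin.snoc e v, ?_, ?_⟩
      · intro i
        induction i using Fin.lastCases with
        | last => simpa using hv
        | cast i' =>
          simpa using Finset.mem_of_mem_erase (Finset.mem_of_mem_filter _ (he i'))
      · intro i j hij
        induction i using Fin.lastCases with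
        | last =>
          exact absurd hij (by rw [Fin.lt_def]; have := j.is_lt; simp; omega)
        | cast i' =>
          induction j using Fin.lastCases with
          | last => simpa using (Finset.mem_filter.mp (he i')).2
          | cast j' =>
            have hij' : i' < j' := by
              rw [Fin.lt_def] at hij ⊢
              simpa using hij
            simpa using hmono i' j' hij'

/-- Every tournament on `2^(k-1)` vertices contains a transitive subtournament on `k` vertices. -/
theorem stmt_0 (k : ℕ) (hk : 1 ≤ k)
    (T : Fin (2 ^ (k - 1)) → Fin (2 ^ (k - 1)) → Prop) (hT : IsTournament T) :
    HasTT k T := by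
  classical
  obtain ⟨k', rfl⟩ : ∃ k', k = k' + 1 := ⟨k - 1, by omega⟩
  obtain ⟨e, he, hmono⟩ := tt_aux T hT k' Finset.univ
    (by simp [Finset.card_univ])
  refine ⟨e, ?_, hmono⟩
  intro i j hij
  by_contra hne
  rcases lt_or_gt_of_ne hne with h | h
  · have := hmono i j h
    rw [hij] at this
    exact hT.1 _ this
  · have := hmono j i h
    rw [hij] at this
    exact hT.1 _ this
end

section
/- Every tournament on 6 vertices contains two vertex-disjoint transitive subtournaments each on 3 vertices. -/
/-- `NC x y z` says the triple with edges encoded by `x = (a→b)`, `y = (b→c)`, `z = (a→c)`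
is not a 3-cycle. -/
def NC (x y z : Bool) : Bool := !((x && y && !z) || (!x && !y && z))

/-- Every orientation of the edges of `K₆` admits a partition into two non-cyclic triples. -/
lemma key : ∀ b01 b02 b03 b04 b05 b12 b13 b14 b15 b23 b24 b25 b34 b35 b45 : Bool,
    (NC b01 b12 b02 && NC b34 b45 b35) = true ∨
    (NC b01 b13 b03 && NC b24 b45 b25) = true ∨
    (NC b01 b14 b04 && NC b23 b35 b25) = true ∨
    (NC b01 b15 b05 && NC b23 b34 b24) = true ∨
    (NC b02 b23 b03 && NC b14 b45 b15) = true ∨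
    (NC b02 b24 b04 && NC b13 b35 b15) = true ∨
    (NC b02 b25 b05 && NC b13 b34 b14) = true ∨
    (NC b03 b34 b04 && NC b12 b25 b15) = true ∨
    (NC b03 b35 b05 && NC b12 b24 b14) = true ∨
    (NC b04 b45 b05 && NC b12 b23 b13) = true := by
  decide

lemma mk3 {T : Fin 6 → Fin 6 → Prop} {x y z : Fin 6}
    (hxy : x ≠ y) (hxz : x ≠ z) (hyz : y ≠ z)
    (h1 : T x y) (h2 : T y z) (h3 : T x z) :
    ∃ e : Fin 3 → Fin 6, Function.Injective e ∧ (∀ i j : Fin 3, i < j → T (e i) (e j)) ∧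
      Set.range e = {x, y, z} := by
  refine ⟨![x, y, z], ?_, ?_, ?_⟩
  · intro i j hij
    fin_cases i <;> fin_cases j <;> simp_all
  · intro i j hij
    fin_cases i <;> fin_cases j <;> simp_all
  · ext w
    constructor
    · rintro ⟨i, rfl⟩
      fin_cases i <;> simp
    · intro hw
      rcases hw with h | h | h
      · exact ⟨0, h.symm⟩
      · exact ⟨1, h.symm⟩
      · exact ⟨2, h.symm⟩

lemma tri {T : Fin 6 → Fin 6 → Prop} (hT : IsTournament T) {a b c : Fin 6}
    (hab : a ≠ b) (hac : a ≠ c) (hbc : b ≠ c)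
    (h : ¬((T a b ∧ T b c ∧ ¬ T a c) ∨ (¬ T a b ∧ ¬ T b c ∧ T a c))) :
    ∃ e : Fin 3 → Fin 6, Function.Injective e ∧ (∀ i j : Fin 3, i < j → T (e i) (e j)) ∧
      Set.range e = {a, b, c} := by
  push_neg at h
  obtain ⟨h1, h2⟩ := h
  by_cases hxy : T a b <;> by_cases hyz : T b c <;> by_cases hxz : T a c
  · exact mk3 hab hac hbc hxy hyz hxz
  · exact absurd (h1 hxy hyz) (by simpa using hxz)
  · -- T a b, ¬ T b c, T a c : order a c b
    have hcb : T c b := (hT.2 c b hbc.symm).mpr hyz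
    obtain ⟨e, i1, i2, i3⟩ := mk3 hac hab hbc.symm hxz hcb hxy
    exact ⟨e, i1, i2, i3.trans (by ext t; simp; tauto)⟩
  · -- T a b, ¬ T b c, ¬ T a c : order c a b
    have hcb : T c b := (hT.2 c b hbc.symm).mpr hyz
    have hca : T c a := (hT.2 c a hac.symm).mpr hxz
    obtain ⟨e, i1, i2, i3⟩ := mk3 hac.symm hbc.symm hab hca hxy hcb
    exact ⟨e, i1, i2, i3.trans (by ext t; simp; tauto)⟩
  · -- ¬ T a b, T b c, T a c : order b a c
    have hba : T b a := (hT.2 b a hab.symm).mpr hxy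
    obtain ⟨e, i1, i2, i3⟩ := mk3 hab.symm hbc hac hba hxz hyz
    exact ⟨e, i1, i2, i3.trans (by ext t; simp; tauto)⟩
  · -- ¬ T a b, T b c, ¬ T a c : order b c a
    have hba : T b a := (hT.2 b a hab.symm).mpr hxy
    have hca : T c a := (hT.2 c a hac.symm).mpr hxz
    obtain ⟨e, i1, i2, i3⟩ := mk3 hbc hab.symm hac.symm hyz hca hba
    exact ⟨e, i1, i2, i3.trans (by ext t; simp; tauto)⟩
  · exact absurd (h2 hxy hyz) (by simpa using hxz)
  · -- none: order c b a
    have hba : T b a := (hT.2 b a hab.symm).mpr hxy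
    have hcb : T c b := (hT.2 c b hbc.symm).mpr hyz
    have hca : T c a := (hT.2 c a hac.symm).mpr hxz
    obtain ⟨e, i1, i2, i3⟩ := mk3 hbc.symm hac.symm hab.symm hcb hba hca
    exact ⟨e, i1, i2, i3.trans (by ext t; simp; tauto)⟩

lemma nc_prop {P Q R : Prop} [Decidable P] [Decidable Q] [Decidable R]
    (h : NC (decide P) (decide Q) (decide R) = true) :
    ¬((P ∧ Q ∧ ¬ R) ∨ (¬ P ∧ ¬ Q ∧ R)) := by
  simp [NC] at h
  tauto

lemma pair {T : Fin 6 → Fin 6 → Prop} (hT : IsTournament T) {a b c d e f : Fin 6}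
    (h1 : ¬((T a b ∧ T b c ∧ ¬ T a c) ∨ (¬ T a b ∧ ¬ T b c ∧ T a c)))
    (h2 : ¬((T d e ∧ T e f ∧ ¬ T d f) ∨ (¬ T d e ∧ ¬ T e f ∧ T d f)))
    (hab : a ≠ b := by decide) (hac : a ≠ c := by decide) (hbc : b ≠ c := by decide)
    (hde : d ≠ e := by decide) (hdf : d ≠ f := by decide) (hef : e ≠ f := by decide)
    (had : a ≠ d := by decide) (hae : a ≠ e := by decide) (haf : a ≠ f := by decide)
    (hbd : b ≠ d := by decide) (hbe : b ≠ e := by decide) (hbf : b ≠ f := by decide)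
    (hcd : c ≠ d := by decide) (hce : c ≠ e := by decide) (hcf : c ≠ f := by decide) :
    ∃ e' f' : Fin 3 → Fin 6, Function.Injective e' ∧ Function.Injective f' ∧
      (∀ i j : Fin 3, i < j → T (e' i) (e' j)) ∧
      (∀ i j : Fin 3, i < j → T (f' i) (f' j)) ∧
      Disjoint (Set.range e') (Set.range f') := by
  obtain ⟨e1, i1, t1, r1⟩ := tri hT hab hac hbc h1
  obtain ⟨e2, i2, t2, r2⟩ := tri hT hde hdf hef h2
  refine ⟨e1, e2, i1, i2, t1, t2, ?_⟩
  rw [r1, r2, Set.disjoint_left]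
  rintro x hx hx'
  simp only [Set.mem_insert_iff, Set.mem_singleton_iff] at hx hx'
  rcases hx with rfl | rfl | rfl <;> rcases hx' with rfl | rfl | rfl <;> simp_all

/-- Every tournament on 6 vertices contains two vertex-disjoint transitive subtournaments
on 3 vertices each. -/
theorem stmt_3 (T : Fin 6 → Fin 6 → Prop) (hT : IsTournament T) :
    ∃ e f : Fin 3 → Fin 6, Function.Injective e ∧ Function.Injective f ∧
      (∀ i j : Fin 3, i < j → T (e i) (e j)) ∧
      (∀ i j : Fin 3, i < j → T (f i) (f j)) ∧
      Disjoint (Set.range e) (Set.range f) := by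
  classical
  have hk := key (decide (T 0 1)) (decide (T 0 2)) (decide (T 0 3)) (decide (T 0 4))
    (decide (T 0 5)) (decide (T 1 2)) (decide (T 1 3)) (decide (T 1 4)) (decide (T 1 5))
    (decide (T 2 3)) (decide (T 2 4)) (decide (T 2 5)) (decide (T 3 4)) (decide (T 3 5))
    (decide (T 4 5))
  rcases hk with h|h|h|h|h|h|h|h|h|h <;> rw [Bool.and_eq_true] at h <;>
    exact pair hT (nc_prop h.1) (nc_prop h.2)
end

section
/- For every rational γ with 0 < γ < 1/30, there exist arbitrarily large n and an n-vertex undirected graph G with minimum degree at least (5/6 − γ)n, together with an orientation of G, such that any collection of vertex-disjoint transitive triangles TT_3 in this orientation has at most n/3 − γn members (equivalently, at least 3γn vertices are uncovered by any such collection). -/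
/-!
Blow up the tournament on six parts in which parts `0, 1, 2, 3` are ordered transitively and
beat part `4`, while `4 → 5 → j` for `j < 4`; parts `0, …, 3` get `(1/6 - γ/2)n` vertices and
parts `4, 5` get `(1/6 + γ)n`. A vertex misses only its own part, so its degree is at least
`(5/6 - γ)n`. Parts `4`, `5` and any third part span a cyclic triangle, so every transitive
triangle has two vertices in parts `0, …, 3`, and a vertex-disjoint family of them has at most
`(4 · (1/6 - γ/2)n)/2 = (1/3 - γ)n` members.
-/

open Finset

variable {ι V : Type*}

theorem ncard_adj_or_adj_add_ncard_fiber [Finite V] {T : ι → ι → Prop}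
    (hirr : ∀ i, ¬ T i i) (htot : ∀ i j, i ≠ j → T i j ∨ T j i) (p : V → ι) (v : V) :
    {u | T (p v) (p u) ∨ T (p u) (p v)}.ncard + {u | p u = p v}.ncard = Nat.card V := by
  have hcompl : {u | T (p v) (p u) ∨ T (p u) (p v)} = {u | p u = p v}ᶜ := by
    ext u
    simp only [Set.mem_ofPred_eq, Set.mem_compl_iff]
    refine ⟨?_, fun hne => (htot _ _ (Ne.symm hne)).imp_right id⟩
    rintro (h | h) heq <;> exact hirr _ (heq ▸ h)
  rw [hcompl]
  exact Set.ncard_compl_add_ncard _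

theorem ncard_preimage_sigma_fst {s : ι → ℕ} (e : V ≃ Σ i, Fin (s i)) (S : Finset ι) :
    {v | (e v).1 ∈ S}.ncard = ∑ i ∈ S, s i := by
  have hS : {x : Σ i, Fin (s i) | x.1 ∈ S} =
      ↑(S.sigma fun i => (univ : Finset (Fin (s i)))) := by
    ext x
    simp
  rw [show {v | (e v).1 ∈ S} = e ⁻¹' {x | x.1 ∈ S} from rfl,
    Set.ncard_preimage_of_injective_subset_range e.injective (by simp), hS,
    Set.ncard_coe_finset, card_sigma]
  simp

theorem two_mul_le_ncard_of_forall_two_mem [Finite V] {A : Set V} {c k : ℕ}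
    (F : Fin c → Fin k → V) (hF : Function.Injective fun q : Fin c × Fin k => F q.1 q.2)
    (hA : ∀ m, ∃ i j, i ≠ j ∧ F m i ∈ A ∧ F m j ∈ A) : 2 * c ≤ A.ncard := by
  choose i j hij hi hj using hA
  let g : Fin c × Bool → A := fun q =>
    if q.2 then ⟨F q.1 (j q.1), hj q.1⟩ else ⟨F q.1 (i q.1), hi q.1⟩
  have hg : Function.Injective g := by
    rintro ⟨m, _ | _⟩ ⟨m', _ | _⟩ h <;>
      simp only [g, Bool.false_eq_true, if_false, if_true, Subtype.mk.injEq] at h <;>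
      obtain ⟨rfl, h⟩ := Prod.ext_iff.mp (@hF (m, _) (m', _) h)
    all_goals first | rfl | exact absurd h (hij m) | exact absurd h.symm (hij m)
  simpa [mul_comm, Nat.card_coe_set_eq] using Nat.card_le_card_of_injective g hg

abbrev sixPartTournament (i j : Fin 6) : Prop :=
  (i < 4 ∧ j < 4 ∧ i < j) ∨ (i < 4 ∧ j = 4) ∨ (i = 4 ∧ j = 5) ∨ (i = 5 ∧ j < 4)

namespace sixPartTournament

theorem irrefl : ∀ i, ¬ sixPartTournament i i := by decide

theorem asymm : ∀ i j, ¬ (sixPartTournament i j ∧ sixPartTournament j i) := by decide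

theorem total : ∀ i j, i ≠ j → sixPartTournament i j ∨ sixPartTournament j i := by decide

theorem two_lt_four_of_transitive : ∀ i j k, sixPartTournament i j → sixPartTournament j k →
    sixPartTournament i k → (i < 4 ∧ j < 4) ∨ (i < 4 ∧ k < 4) ∨ (j < 4 ∧ k < 4) := by
  decide

end sixPartTournament

theorem exists_orientation_ttPacking_le (a b : ℕ) (hab : a ≤ b) :
    ∃ D : Fin (4 * a + 2 * b) → Fin (4 * a + 2 * b) → Prop,
      (∀ v, ¬ D v v) ∧ (∀ u v, ¬ (D u v ∧ D v u)) ∧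
      (∀ v, 4 * a + b ≤ {u | D v u ∨ D u v}.ncard) ∧
      ∀ (c : ℕ) (F : Fin c → Fin 3 → Fin (4 * a + 2 * b)),
        Function.Injective (fun p : Fin c × Fin 3 => F p.1 p.2) →
        (∀ m, D (F m 0) (F m 1) ∧ D (F m 1) (F m 2) ∧ D (F m 0) (F m 2)) →
        c ≤ 2 * a := by
  let s : Fin 6 → ℕ := fun i => if i < 4 then a else b
  have hcard : Fintype.card (Σ i, Fin (s i)) = 4 * a + 2 * b := by
    simp [s, Fin.sum_univ_succ]
    ring
  let e := (Fintype.equivFinOfCardEq hcard).symm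
  refine ⟨fun u v => sixPartTournament (e u).1 (e v).1, fun v => sixPartTournament.irrefl _,
    fun u v => sixPartTournament.asymm _ _, fun v => ?_, fun c F hF hTT => ?_⟩
  · have hdeg := ncard_adj_or_adj_add_ncard_fiber sixPartTournament.irrefl
      sixPartTournament.total (fun u => (e u).1) v
    have hfib : {u | (e u).1 = (e v).1}.ncard ≤ b := by
      have hsize := ncard_preimage_sigma_fst e {(e v).1}
      simp only [mem_singleton, sum_singleton] at hsize
      rw [hsize]
      simp only [s]
      split_ifs <;> omega
    rw [Nat.card_eq_fintype_card, Fintype.card_fin] at hdeg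
    beta_reduce
    omega
  · have hcardA := ncard_preimage_sigma_fst e (univ.filter (· < 4))
    have hsumA : ∑ i ∈ univ.filter (· < 4), s i = 4 * a := by
      rw [sum_congr rfl fun i hi => if_pos (mem_filter.mp hi).2, sum_const, smul_eq_mul]
      rfl
    have h2c := two_mul_le_ncard_of_forall_two_mem F hF (A := {v | (e v).1 ∈ univ.filter (· < 4)})
      fun m => ?_
    · omega
    obtain ⟨h01, h12, h02⟩ := hTT m
    simp only [Set.mem_ofPred_eq, mem_filter, mem_univ, true_and]
    rcases sixPartTournament.two_lt_four_of_transitive _ _ _ h01 h12 h02 with h | h | h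
    exacts [⟨0, 1, by decide, h⟩, ⟨0, 2, by decide, h⟩, ⟨1, 2, by decide, h⟩]

theorem exists_part_sizes (γ : ℚ) (h0 : 0 ≤ γ) (h1 : γ ≤ 1 / 3) (N : ℕ) :
    ∃ a b : ℕ, a ≤ b ∧ N ≤ 4 * a + 2 * b ∧
      (b : ℝ) = (1 / 6 + γ) * (4 * a + 2 * b : ℕ) ∧
      (a : ℝ) = (1 / 6 - γ / 2) * (4 * a + 2 * b : ℕ) := by
  obtain ⟨k, hk⟩ := Int.eq_ofNat_of_zero_le (Rat.num_nonneg.mpr h0)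
  set d := γ.den
  have hγ : (γ : ℝ) = k / d := by
    rw [← Rat.num_div_den γ, hk]
    push_cast
    rfl
  have hd : (0 : ℝ) < d := by exact_mod_cast γ.den_pos
  have h3k : 3 * k ≤ d := by
    have : (γ : ℝ) ≤ 1 / 3 := by simpa using (Rat.cast_le (K := ℝ)).mpr h1
    rw [hγ, div_le_iff₀ hd] at this
    exact_mod_cast (by linarith : (3 * k : ℝ) ≤ d)
  refine ⟨(d - 3 * k) * (N + 1), (d + 6 * k) * (N + 1), by gcongr; omega, ?_, ?_, ?_⟩
  · have := γ.den_pos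
    nlinarith
  all_goals
    push_cast [Nat.cast_sub h3k, hγ]
    field_simp
    ring

/-- For every rational `0 < γ < 1/30` there are arbitrarily large `n` and an oriented
`n`-vertex graph (an orientation `D` of an undirected graph) with all degrees at least
`(5/6 - γ)n`, in which any family of vertex-disjoint transitive triangles has at most
`n/3 - γn` members. -/
theorem stmt_7 (γ : ℚ) (h0 : 0 < γ) (h1 : γ < 1 / 30) (N : ℕ) :
    ∃ n : ℕ, N ≤ n ∧ ∃ D : Fin n → Fin n → Prop,
      (∀ v, ¬ D v v) ∧ (∀ u v, ¬ (D u v ∧ D v u)) ∧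
      (∀ v : Fin n, ((5 : ℝ) / 6 - (γ : ℝ)) * n ≤ ({u | D v u ∨ D u v} : Set (Fin n)).ncard) ∧
      ∀ (c : ℕ) (F : Fin c → Fin 3 → Fin n),
        Function.Injective (fun p : Fin c × Fin 3 => F p.1 p.2) →
        (∀ m, D (F m 0) (F m 1) ∧ D (F m 1) (F m 2) ∧ D (F m 0) (F m 2)) →
        (c : ℝ) ≤ (n : ℝ) / 3 - (γ : ℝ) * n := by
  obtain ⟨a, b, hab, hN, hb, ha⟩ := exists_part_sizes γ h0.le (by linarith) N
  obtain ⟨D, hirr, hasymm, hdeg, hpack⟩ := exists_orientation_ttPacking_le a b hab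
  refine ⟨4 * a + 2 * b, hN, D, hirr, hasymm, fun v => ?_, fun c F hF hTT => ?_⟩
  · have hdegR : ((4 * a + b : ℕ) : ℝ) ≤ _ := Nat.cast_le.mpr (hdeg v)
    push_cast at hdegR hb ⊢
    linarith
  · have hcR : (c : ℝ) ≤ (2 * a : ℕ) := Nat.cast_le.mpr (hpack c F hF hTT)
    push_cast at hcR ha ⊢
    linarith
end

section
/- Let T be a tournament on 6 indices such that (5,6) is an edge of T and for each i ∈ {1,2,3,4}, both (6,i) and (i,5) are edges of T. Let G be a complete 6-partite oriented graph with parts V_1,...,V_6 where all edges between V_i and V_j are directed from V_i to V_j whenever (i,j) is an edge of T. Then every transitive triangle in this oriented graph contains at most one vertex from V_5 ∪ V_6. -/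
/-- Blow-up of a tournament `T` on 6 indices in which (5,6) is an edge and, for
`i ∈ {1,2,3,4}`, both (6,i) and (i,5) are edges (parts indexed by `Fin 6`, so these are
index 4 and 5): every transitive triangle has at most one vertex in `V_5 ∪ V_6`. -/
theorem stmt_8 (T : Fin 6 → Fin 6 → Prop) (hT : IsTournament T)
    (h56 : T 4 5) (hlow : ∀ i : Fin 6, i.1 < 4 → T 5 i ∧ T i 4)
    (V : Type*) (part : V → Fin 6) (D : V → V → Prop)
    (hD : ∀ u v, D u v ↔ part u ≠ part v ∧ T (part u) (part v))
    (a b c : V) (h1 : D a b) (h2 : D b c) (h3 : D a c) :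
    ¬ ((part a = 4 ∨ part a = 5) ∧ (part b = 4 ∨ part b = 5)) ∧
    ¬ ((part a = 4 ∨ part a = 5) ∧ (part c = 4 ∨ part c = 5)) ∧
    ¬ ((part b = 4 ∨ part b = 5) ∧ (part c = 4 ∨ part c = 5)) := by
  obtain ⟨hirr, hasym⟩ := hT
  rw [hD] at h1 h2 h3
  obtain ⟨nab, tab⟩ := h1
  obtain ⟨nbc, tbc⟩ := h2
  obtain ⟨nac, tac⟩ := h3
  have key : ∀ x y : Fin 6, x ≠ y → T x y → (x = 4 ∨ x = 5) → (y = 4 ∨ y = 5) →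
      x = 4 ∧ y = 5 := by
    intro x y hxy hxyT hx hy
    rcases hx with rfl | rfl <;> rcases hy with rfl | rfl
    · exact absurd rfl hxy
    · exact ⟨rfl, rfl⟩
    · exact absurd h56 ((hasym _ _ hxy).mp hxyT)
    · exact absurd rfl hxy
  have small : ∀ z : Fin 6, z ≠ 4 → z ≠ 5 → z.1 < 4 := by
    intro z h4 h5
    have hz := z.isLt
    have h4' : z.1 ≠ 4 := fun h => h4 (Fin.ext h)
    have h5' : z.1 ≠ 5 := fun h => h5 (Fin.ext h)
    omega
  refine ⟨?_, ?_, ?_⟩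
  · rintro ⟨ha, hb⟩
    obtain ⟨e1, e2⟩ := key _ _ nab tab ha hb
    have hc4 : part c ≠ 4 := by rw [← e1]; exact (Ne.symm nac)
    have hc5 : part c ≠ 5 := by rw [← e2]; exact (Ne.symm nbc)
    have hlo := (hlow (part c) (small _ hc4 hc5)).2
    rw [e1] at tac
    exact ((hasym _ _ hc4).mp hlo) tac
  · rintro ⟨ha, hc⟩
    obtain ⟨e1, e2⟩ := key _ _ nac tac ha hc
    have hb4 : part b ≠ 4 := by rw [← e1]; exact (Ne.symm nab)
    have hb5 : part b ≠ 5 := by rw [← e2]; exact nbc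
    have hlo := (hlow (part b) (small _ hb4 hb5)).2
    rw [e1] at tab
    exact ((hasym _ _ hb4).mp hlo) tab
  · rintro ⟨hb, hc⟩
    obtain ⟨e1, e2⟩ := key _ _ nbc tbc hb hc
    have ha4 : part a ≠ 4 := by rw [← e1]; exact nab
    have ha5 : part a ≠ 5 := by rw [← e2]; exact nac
    have hlo := (hlow (part a) (small _ ha4 ha5)).1
    rw [e2] at tac
    exact ((hasym _ _ ha5).mp tac) hlo
end

section
/- Assuming the Hajnal–Szemerédi theorem and that every tournament on 6 vertices has a TT_3-factor: every undirected graph G on n vertices with 3 | n and minimum degree at least 5n/6 has the property that every orientation of G contains a TT_3-factor. -/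
def HasTTFactor (h : ℕ) {n : ℕ} (D : Fin n → Fin n → Prop) : Prop :=
  ∃ F : Fin (n / h) → Fin h → Fin n,
    Function.Bijective (fun p : Fin (n / h) × Fin h => F p.1 p.2) ∧
    ∀ m (i j : Fin h), i < j → D (F m i) (F m j)

set_option maxHeartbeats 1000000

theorem ncard_eq_filter_card {n : ℕ} (Adj : Fin n → Fin n → Prop)
    (v : Fin n) [DecidablePred (Adj v)] :
    ({u | Adj v u} : Set (Fin n)).ncard = (Finset.univ.filter (Adj v ·)).card := by
  rw [Set.ncard_eq_toFinset_card']
  congr 1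
  ext u
  simp

theorem exists_TT3
    (T6 : ∀ T : Fin 6 → Fin 6 → Prop, IsTournament T → HasTTFactor 3 T)
    (n : ℕ) (hn : 0 < n)
    (Adj : Fin n → Fin n → Prop) (hsymm : ∀ u v, Adj u v → Adj v u) (hirr : ∀ v, ¬ Adj v v)
    (hdeg : ∀ v, 5 * (n : ℝ) / 6 ≤ ({u | Adj v u} : Set (Fin n)).ncard)
    (D : Fin n → Fin n → Prop)
    (hor : ∀ u v, Adj u v ↔ (D u v ∨ D v u)) (hasym : ∀ u v, ¬ (D u v ∧ D v u)) :
    ∃ a b c : Fin n, D a b ∧ D b c ∧ D a c := by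
  classical
  have hD_ne : ∀ u v, D u v → u ≠ v := by
    rintro u v h rfl; exact hasym u u ⟨h, h⟩
  set N : Fin n → Finset (Fin n) := fun v => Finset.univ.filter (Adj v ·) with hN
  have hNcard : ∀ v, 5 * (n:ℝ) / 6 ≤ (N v).card := by
    intro v
    have := hdeg v
    rwa [ncard_eq_filter_card Adj v] at this
  have hmemN : ∀ u v, u ∈ N v ↔ Adj v u := by intro u v; simp [hN]
  have hstep : ∀ (S : Finset (Fin n)) v, (S.card : ℝ) + (N v).card - n ≤ ((S ∩ N v).card : ℝ) := by
    intro S v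
    have h1 : (S ∩ N v).card + (S ∪ N v).card = S.card + (N v).card :=
      Finset.card_inter_add_card_union S (N v)
    have h2 : (S ∪ N v).card ≤ n := by
      simpa using Finset.card_le_univ (S ∪ N v)
    have h1' : ((S ∩ N v).card : ℝ) + (S ∪ N v).card = S.card + (N v).card := by
      exact_mod_cast h1
    have h2' : ((S ∪ N v).card : ℝ) ≤ n := by exact_mod_cast h2
    linarith
  have pick : ∀ S : Finset (Fin n), (0:ℝ) < S.card → ∃ v, v ∈ S := by
    intro S h
    apply Finset.card_pos.mp
    exact_mod_cast h
  have hn' : (0:ℝ) < n := by exact_mod_cast hn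
  obtain ⟨v0, _⟩ := pick Finset.univ (by simpa using hn')
  set S1 := N v0 with hS1
  have h1 : (n:ℝ) - 1 * (n/6) ≤ S1.card := by have := hNcard v0; linarith
  obtain ⟨v1, hv1⟩ := pick S1 (by linarith)
  set S2 := S1 ∩ N v1 with hS2
  have h2 : (n:ℝ) - 2 * (n/6) ≤ S2.card := by have := hstep S1 v1; have := hNcard v1; linarith
  obtain ⟨v2, hv2⟩ := pick S2 (by linarith)
  set S3 := S2 ∩ N v2 with hS3
  have h3 : (n:ℝ) - 3 * (n/6) ≤ S3.card := by have := hstep S2 v2; have := hNcard v2; linarith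
  obtain ⟨v3, hv3⟩ := pick S3 (by linarith)
  set S4 := S3 ∩ N v3 with hS4
  have h4 : (n:ℝ) - 4 * (n/6) ≤ S4.card := by have := hstep S3 v3; have := hNcard v3; linarith
  obtain ⟨v4, hv4⟩ := pick S4 (by linarith)
  set S5 := S4 ∩ N v4 with hS5
  have h5 : (n:ℝ) - 5 * (n/6) ≤ S5.card := by have := hstep S4 v4; have := hNcard v4; linarith
  obtain ⟨v5, hv5⟩ := pick S5 (by linarith)
  simp only [hS5, hS4, hS3, hS2, hS1, Finset.mem_inter, hmemN] at hv1 hv2 hv3 hv4 hv5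
  obtain ⟨⟨⟨⟨h04, h14⟩, h24⟩, h34⟩, h45⟩ := hv5
  obtain ⟨⟨⟨h03, h13⟩, h23⟩, h34'⟩ := hv4
  obtain ⟨⟨h02, h12⟩, h23'⟩ := hv3
  obtain ⟨h01, h12'⟩ := hv2
  set g : Fin 6 → Fin n := ![v0, v1, v2, v3, v4, v5] with hg
  have hadj : ∀ i j : Fin 6, i ≠ j → Adj (g i) (g j) := by
    have key : ∀ i j : Fin 6, i < j → Adj (g i) (g j) := by
      intro i j hij
      fin_cases i <;> fin_cases j <;>
        first
          | exact absurd hij (by decide)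
          | (simp only [hg]; norm_num [Matrix.cons_val_zero, Matrix.cons_val_one]; assumption)
    intro i j hij
    rcases lt_or_gt_of_ne hij with h | h
    · exact key i j h
    · exact hsymm _ _ (key j i h)
  have hT : IsTournament (fun i j : Fin 6 => D (g i) (g j)) := by
    constructor
    · intro i h; exact hD_ne _ _ h rfl
    · intro i j hij
      have hadj' := hadj i j hij
      rw [hor] at hadj'
      constructor
      · intro hd1 hd2; exact hasym _ _ ⟨hd1, hd2⟩
      · intro hd2; rcases hadj' with h | h
        · exact h
        · exact absurd h hd2
  obtain ⟨F, hFbij, hFord⟩ := T6 _ hT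
  refine ⟨g (F ⟨0, by norm_num⟩ 0), g (F ⟨0, by norm_num⟩ 1), g (F ⟨0, by norm_num⟩ 2), ?_, ?_, ?_⟩
  · exact hFord _ 0 1 (by decide)
  · exact hFord _ 1 2 (by decide)
  · exact hFord _ 0 2 (by decide)


theorem caseA
    (HS : ∀ (n k : ℕ), 0 < k → k ∣ n →
      ∀ Adj : Fin n → Fin n → Prop, (∀ u v, Adj u v → Adj v u) → (∀ v, ¬ Adj v v) →
      (∀ v, (n : ℝ) * (1 - 1 / k) ≤ ({u | Adj v u} : Set (Fin n)).ncard) →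
      ∃ P : Fin (n / k) → Fin k → Fin n,
        Function.Bijective (fun p : Fin (n / k) × Fin k => P p.1 p.2) ∧
        ∀ m (i j : Fin k), i ≠ j → Adj (P m i) (P m j))
    (T6 : ∀ T : Fin 6 → Fin 6 → Prop, IsTournament T → HasTTFactor 3 T)
    (n : ℕ) (hn : 6 ∣ n)
    (Adj : Fin n → Fin n → Prop) (hsymm : ∀ u v, Adj u v → Adj v u) (hirr : ∀ v, ¬ Adj v v)
    (hdeg : ∀ v, 5 * (n : ℝ) / 6 ≤ ({u | Adj v u} : Set (Fin n)).ncard)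
    (D : Fin n → Fin n → Prop)
    (hor : ∀ u v, Adj u v ↔ (D u v ∨ D v u)) (hasym : ∀ u v, ¬ (D u v ∧ D v u)) :
    HasTTFactor 3 D := by
  have hD_ne : ∀ u v, D u v → u ≠ v := by
    rintro u v h rfl; exact hasym u u ⟨h, h⟩
  obtain ⟨P, hPbij, hPadj⟩ := HS n 6 (by norm_num) hn Adj hsymm hirr (by
    intro v
    calc (n:ℝ) * (1 - 1/6) = 5 * n / 6 := by ring
    _ ≤ _ := hdeg v)
  have hTfac : ∀ m : Fin (n/6), HasTTFactor 3 (fun i j : Fin 6 => D (P m i) (P m j)) := by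
    intro m
    apply T6
    constructor
    · intro i h; exact hD_ne _ _ h rfl
    · intro i j hij
      have hne : P m i ≠ P m j := by
        intro h
        have := hPbij.injective (a₁ := (m,i)) (a₂ := (m,j)) (by simpa using h)
        exact hij (by simpa using congrArg Prod.snd this)
      have hadj := hPadj m i j hij
      rw [hor] at hadj
      constructor
      · intro h1 h2; exact hasym _ _ ⟨h1, h2⟩
      · intro h2; rcases hadj with h|h
        · exact h
        · exact absurd h h2
  choose G hGbij hGord using hTfac
  have hcard : n/6 * (6/3) = n/3 := by omega
  let e : Fin (n/3) ≃ Fin (n/6) × Fin (6/3) :=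
    (finCongr hcard.symm).trans finProdFinEquiv.symm
  refine ⟨fun q i => P (e q).1 (G (e q).1 (e q).2 i), ?_, ?_⟩
  · rw [Fintype.bijective_iff_injective_and_card]
    constructor
    · rintro ⟨q, i⟩ ⟨q', i'⟩ h
      simp only at h
      have hp := hPbij.injective (a₁ := ((e q).1, G (e q).1 (e q).2 i))
        (a₂ := ((e q').1, G (e q').1 (e q').2 i')) h
      simp only [Prod.mk.injEq] at hp
      obtain ⟨h1, h2⟩ := hp
      rw [h1] at h2
      have hg := (hGbij (e q').1).injective (a₁ := ((e q).2, i)) (a₂ := ((e q').2, i')) h2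
      simp only [Prod.mk.injEq] at hg
      obtain ⟨h3, h4⟩ := hg
      have : q = q' := e.injective (Prod.ext h1 h3)
      exact Prod.ext this h4
    · simp only [Fintype.card_prod, Fintype.card_fin]
      exact Nat.div_mul_cancel (dvd_trans (by norm_num) hn)
  · intro q i j hij
    exact hGord (e q).1 (e q).2 i j hij


/-- Assuming the Hajnal–Szemerédi theorem and that every tournament on 6 vertices has a
TT_3-factor: every graph on `n` vertices with `3 ∣ n` and minimum degree at least `5n/6`
has, in every orientation, a TT_3-factor. -/
theorem stmt_11
    (HS : ∀ (n k : ℕ), 0 < k → k ∣ n →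
      ∀ Adj : Fin n → Fin n → Prop, (∀ u v, Adj u v → Adj v u) → (∀ v, ¬ Adj v v) →
      (∀ v, (n : ℝ) * (1 - 1 / k) ≤ ({u | Adj v u} : Set (Fin n)).ncard) →
      ∃ P : Fin (n / k) → Fin k → Fin n,
        Function.Bijective (fun p : Fin (n / k) × Fin k => P p.1 p.2) ∧
        ∀ m (i j : Fin k), i ≠ j → Adj (P m i) (P m j))
    (T6 : ∀ T : Fin 6 → Fin 6 → Prop, IsTournament T → HasTTFactor 3 T)
    (n : ℕ) (hn : 3 ∣ n)
    (Adj : Fin n → Fin n → Prop) (hsymm : ∀ u v, Adj u v → Adj v u) (hirr : ∀ v, ¬ Adj v v)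
    (hdeg : ∀ v, 5 * (n : ℝ) / 6 ≤ ({u | Adj v u} : Set (Fin n)).ncard)
    (D : Fin n → Fin n → Prop)
    (hor : ∀ u v, Adj u v ↔ (D u v ∨ D v u)) (hasym : ∀ u v, ¬ (D u v ∧ D v u)) :
    HasTTFactor 3 D := by
  classical
  by_cases h6 : 6 ∣ n
  · exact caseA HS T6 n h6 Adj hsymm hirr hdeg D hor hasym
  have hmod : n % 6 = 3 := by omega
  have hD_ne : ∀ u v, D u v → u ≠ v := by
    rintro u v h rfl; exact hasym u u ⟨h, h⟩
  obtain ⟨a, b, c, hab, hbc, hac⟩ :=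
    exists_TT3 T6 n (by omega) Adj hsymm hirr hdeg D hor hasym
  have hne_ab : a ≠ b := hD_ne _ _ hab
  have hne_bc : b ≠ c := hD_ne _ _ hbc
  have hne_ac : a ≠ c := hD_ne _ _ hac
  set s : Finset (Fin n) := ({a, b, c} : Finset (Fin n))ᶜ with hs
  have habc_card : ({a, b, c} : Finset (Fin n)).card = 3 := by
    rw [Finset.card_insert_of_notMem (by simp [hne_ab, hne_ac]),
      Finset.card_insert_of_notMem (by simp [hne_bc]), Finset.card_singleton]
  have hscard : s.card = n - 3 := by
    rw [hs, Finset.card_compl, habc_card, Fintype.card_fin]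
  set e := s.orderIsoOfFin hscard with he
  set ι : Fin (n - 3) → Fin n := fun i => (e i : Fin n) with hι
  have hιs : ∀ i, ι i ∈ s := fun i => (e i).2
  have hιinj : Function.Injective ι := fun i j h => e.injective (Subtype.ext h)
  have hιsurj : ∀ w ∈ s, ∃ i, ι i = w := by
    intro w hw
    exact ⟨e.symm ⟨w, hw⟩, by simp [hι]⟩
  set Adj' : Fin (n-3) → Fin (n-3) → Prop := fun u v => Adj (ι u) (ι v) with hAdj'
  set D' : Fin (n-3) → Fin (n-3) → Prop := fun u v => D (ι u) (ι v) with hD'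
  -- degree bound for Adj'
  have hdeg' : ∀ v, 5 * ((n-3 : ℕ) : ℝ) / 6 ≤ ({u | Adj' v u} : Set (Fin (n-3))).ncard := by
    intro v
    rw [ncard_eq_filter_card Adj' v]
    set w := ι v with hw
    have himg : (Finset.univ.filter (fun u => Adj' v u)).image ι
        = s.filter (fun x => Adj w x) := by
      ext x
      simp only [Finset.mem_image, Finset.mem_filter, Finset.mem_univ, true_and]
      constructor
      · rintro ⟨u, hu, rfl⟩; exact ⟨hιs u, hu⟩
      · rintro ⟨hx, hAx⟩
        obtain ⟨u, rfl⟩ := hιsurj x hx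
        exact ⟨u, hAx, rfl⟩
    have hcard_eq : (Finset.univ.filter (fun u => Adj' v u)).card
        = (s.filter (fun x => Adj w x)).card := by
      rw [← himg, Finset.card_image_of_injective _ hιinj]
    rw [hcard_eq]
    -- s.filter (Adj w) = (N w) \ {a,b,c}
    have hsf : s.filter (fun x => Adj w x)
        = (Finset.univ.filter (fun x => Adj w x)) \ ({a,b,c} : Finset (Fin n)) := by
      ext x
      simp only [Finset.mem_filter, Finset.mem_sdiff, Finset.mem_univ, true_and, hs,
        Finset.mem_compl]
      exact and_comm
    rw [hsf]
    have hNw : 5 * (n:ℝ)/6 ≤ (Finset.univ.filter (fun x => Adj w x)).card := by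
      have := hdeg w
      rwa [ncard_eq_filter_card Adj w] at this
    set k := (Finset.univ.filter (fun x => Adj w x)).card with hk
    have h5n : 5 * n ≤ 6 * k := by
      have : (5 * n : ℝ) ≤ 6 * k := by linarith
      exact_mod_cast this
    have h5n' : 5 * n + 3 ≤ 6 * k := by omega
    have hbig : k ≤ (Finset.univ.filter (fun x => Adj w x) \ ({a,b,c} : Finset (Fin n))).card
        + 3 := by
      calc k ≤ (Finset.univ.filter (fun x => Adj w x) \ ({a,b,c} : Finset (Fin n))).card
          + ({a,b,c} : Finset (Fin n)).card := Finset.card_le_card_sdiff_add_card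
        _ = _ := by rw [habc_card]
    have hbig' : (k:ℝ) ≤ ((Finset.univ.filter (fun x => Adj w x)
        \ ({a,b,c} : Finset (Fin n))).card : ℝ) + 3 := by exact_mod_cast hbig
    have hn3 : ((n - 3 : ℕ) : ℝ) = (n:ℝ) - 3 := by
      have : (3:ℕ) ≤ n := by omega
      push_cast [this]; ring
    rw [hn3]
    have h5n'' : (5 * n + 3 : ℝ) ≤ 6 * k := by exact_mod_cast h5n'
    linarith
  -- apply caseA on n - 3
  have hdvd6 : 6 ∣ (n - 3) := by omega
  obtain ⟨F', hF'bij, hF'ord⟩ :=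
    caseA HS T6 (n-3) hdvd6 Adj' (fun u v h => hsymm _ _ h) (fun v h => hirr _ h) hdeg' D'
      (fun u v => hor _ _) (fun u v h => hasym _ _ h)
  -- combine
  have hnt : n / 3 = ((n-3)/3) + 1 := by omega
  set w3 : Fin 3 → Fin n := ![a, b, c] with hw3
  have hw3mem : ∀ i : Fin 3, w3 i ∈ ({a,b,c} : Finset (Fin n)) := by
    intro i; fin_cases i <;> simp [hw3]
  have hw3inj : Function.Injective w3 := by
    intro i j h
    fin_cases i <;> fin_cases j <;>
      simp only [hw3, Matrix.cons_val_zero, Matrix.cons_val_one, Matrix.head_cons,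
        Matrix.cons_val_two, Matrix.tail_cons] at h <;>
      first
        | rfl
        | exact absurd h hne_ab
        | exact absurd h hne_bc
        | exact absurd h hne_ac
        | exact absurd h.symm hne_ab
        | exact absurd h.symm hne_bc
        | exact absurd h.symm hne_ac
  refine ⟨fun q i => if h : (q : ℕ) < ((n-3)/3) then ι (F' ⟨q, h⟩ i) else w3 i, ?_, ?_⟩
  · rw [Fintype.bijective_iff_injective_and_card]
    constructor
    · rintro ⟨q, i⟩ ⟨q', i'⟩ h
      simp only at h
      by_cases hq : (q : ℕ) < ((n-3)/3) <;> by_cases hq' : (q' : ℕ) < ((n-3)/3)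
      · simp only [dif_pos hq, dif_pos hq'] at h
        have h2 := hιinj h
        have h3 := hF'bij.injective (a₁ := (⟨q, hq⟩, i)) (a₂ := (⟨q', hq'⟩, i')) h2
        simp only [Prod.mk.injEq, Fin.mk.injEq] at h3
        exact Prod.ext (Fin.ext h3.1) h3.2
      · simp only [dif_pos hq, dif_neg hq'] at h
        exfalso
        have := hιs (F' ⟨q, hq⟩ i)
        rw [h, hs, Finset.mem_compl] at this
        exact this (hw3mem i')
      · simp only [dif_neg hq, dif_pos hq'] at h
        exfalso
        have := hιs (F' ⟨q', hq'⟩ i')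
        rw [← h, hs, Finset.mem_compl] at this
        exact this (hw3mem i)
      · simp only [dif_neg hq, dif_neg hq'] at h
        have hqq : q = q' := by
          have hq1 : (q : ℕ) < n / 3 := q.2
          have hq2 : (q' : ℕ) < n / 3 := q'.2
          exact Fin.ext (by omega)
        exact Prod.ext hqq (hw3inj h)
    · simp only [Fintype.card_prod, Fintype.card_fin]
      exact Nat.div_mul_cancel hn
  · intro q i j hij
    by_cases hq : (q : ℕ) < ((n-3)/3)
    · simp only [dif_pos hq]
      exact hF'ord ⟨q, hq⟩ i j hij
    · simp only [dif_neg hq]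
      fin_cases i <;> fin_cases j <;>
        first
          | exact absurd hij (by decide)
          | (simp only [hw3, Matrix.cons_val_zero, Matrix.cons_val_one, Matrix.head_cons,
              Matrix.cons_val_two, Matrix.tail_cons]; assumption)
end

section
/- There exists a tournament on 7 vertices containing no transitive subtournament on 4 vertices, i.e., f(4) ≥ 8. -/
/-!
The Paley tournament on `ZMod 7` (`x → y` iff `y - x` is a nonzero square) is a tournament
because `-1` is not a square mod `7`. The out-neighbourhood of `0` is `{1, 2, 4}`, on which it is
the cyclic triangle `1 → 2 → 4 → 1`; by translation invariance every out-neighbourhood is cyclic,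
so no vertex can be the source of a transitive `4`-set. Restricting it to `Fin m` for `m ≤ 7`
shows `f(4) ≥ 8`, while the set defining `f(4)` is nonempty since, splitting off a vertex and
recursing into its larger neighbourhood, every tournament on `2 ^ k` vertices contains `TT_(k+1)`.
-/

open Finset Function

section Tournament

variable {V W : Type*} {T : V → V → Prop}

theorem IsTournament.comap (hT : IsTournament T) {f : W → V} (hf : Injective f) :
    IsTournament fun a b => T (f a) (f b) :=
  ⟨fun v => hT.1 (f v), fun _ _ huv => hT.2 _ _ (hf.ne huv)⟩

theorem HasTT.of_comap {f : W → V} (hf : Injective f) {k : ℕ}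
    (h : HasTT k fun a b => T (f a) (f b)) : HasTT k T := by
  obtain ⟨e, he, hT⟩ := h
  exact ⟨f ∘ e, hf.comp he, hT⟩

theorem hasTT_length_of_pairwise (hirr : ∀ v, ¬ T v v) {l : List V} (hl : l.Pairwise T) :
    HasTT l.length T := by
  have hnodup : l.Nodup := hl.imp fun hab hEq => by subst hEq; exact hirr _ hab
  exact ⟨l.get, List.nodup_iff_injective_get.mp hnodup, List.pairwise_iff_get.mp hl⟩

theorem IsTournament.exists_pairwise_of_two_pow_le_card (hT : IsTournament T) (k : ℕ)
    (s : Finset V) (hs : 2 ^ k ≤ #s) :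
    ∃ l : List V, l.length = k + 1 ∧ (∀ x ∈ l, x ∈ s) ∧ l.Pairwise T := by
  classical
  induction k generalizing s with
  | zero =>
    obtain ⟨v, hv⟩ := card_pos.mp (by simpa using hs)
    exact ⟨[v], rfl, by simpa using hv, List.pairwise_singleton _ _⟩
  | succ k ih =>
    obtain ⟨v, hv⟩ := card_pos.mp (lt_of_lt_of_le (Nat.two_pow_pos _) hs)
    set outNbhd := (s.erase v).filter (T v)
    set inNbhd := (s.erase v).filter (¬ T v ·)
    have hsplit : #outNbhd + #inNbhd + 1 = #s := by
      rw [card_filter_add_card_filter_not, card_erase_add_one hv]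
    have hlarge : 2 ^ k ≤ #outNbhd ∨ 2 ^ k ≤ #inNbhd := by
      rw [pow_succ] at hs
      omega
    rcases hlarge with hout | hin
    · obtain ⟨l, hlen, hls, hl⟩ := ih outNbhd hout
      have hmem : ∀ x ∈ l, x ∈ s.erase v ∧ T v x := fun x hx => mem_filter.mp (hls x hx)
      have hls' : ∀ x ∈ l, x ∈ s := fun x hx => mem_of_mem_erase (hmem x hx).1
      refine ⟨v :: l, by simp [hlen], by simpa [hv] using hls', ?_⟩
      exact List.pairwise_cons.mpr ⟨fun x hx => (hmem x hx).2, hl⟩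
    · obtain ⟨l, hlen, hls, hl⟩ := ih inNbhd hin
      have hmem : ∀ x ∈ l, x ∈ s.erase v ∧ ¬ T v x := fun x hx => mem_filter.mp (hls x hx)
      have hto : ∀ x ∈ l, T x v := fun x hx =>
        (hT.2 x v (ne_of_mem_erase (hmem x hx).1)).mpr (hmem x hx).2
      have hls' : ∀ x ∈ l, x ∈ s := fun x hx => mem_of_mem_erase (hmem x hx).1
      refine ⟨l ++ [v], by simp [hlen], by simpa [or_imp, forall_and, hv] using hls', ?_⟩
      simpa [List.pairwise_append, hl] using hto

theorem IsTournament.hasTT_of_two_pow_le_card [Fintype V] (hT : IsTournament T) {k : ℕ}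
    (hk : 2 ^ k ≤ Fintype.card V) : HasTT (k + 1) T := by
  obtain ⟨l, hlen, -, hl⟩ := hT.exists_pairwise_of_two_pow_le_card k univ hk
  exact hlen ▸ hasTT_length_of_pairwise hT.1 hl

end Tournament

section Paley

def paley (F : Type*) [Ring F] (x y : F) : Prop := y - x ≠ 0 ∧ IsSquare (y - x)

theorem paley_sub_sub {F : Type*} [Ring F] (x y c : F) : paley F (x - c) (y - c) ↔ paley F x y := by
  simp only [paley, sub_sub_sub_cancel_right]

variable {F : Type*} [Field F] [Fintype F]

theorem FiniteField.isSquare_neg_iff_not_isSquare (hF : Fintype.card F % 4 = 3) {a : F}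
    (ha : a ≠ 0) : IsSquare (-a) ↔ ¬ IsSquare a := by
  classical
  have hneg_one : quadraticChar F (-1) = -1 :=
    quadraticChar_neg_one_iff_not_isSquare.mpr (by simp [FiniteField.isSquare_neg_one_iff, hF])
  rw [← quadraticChar_one_iff_isSquare (neg_ne_zero.mpr ha), ← quadraticChar_neg_one_iff_not_isSquare,
    neg_eq_neg_one_mul, map_mul, hneg_one]
  constructor <;> intro h <;> linarith

theorem paley_isTournament (hF : Fintype.card F % 4 = 3) : IsTournament (paley F) := by
  refine ⟨fun v hv => hv.1 (sub_self v), fun u v huv => ?_⟩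
  have hvu : v - u ≠ 0 := sub_ne_zero.mpr huv.symm
  rw [paley, paley, ← neg_sub v u, FiniteField.isSquare_neg_iff_not_isSquare hF hvu]
  simp [hvu, sub_ne_zero.mpr huv]

end Paley

instance : Fact (Nat.Prime 7) := ⟨Nat.prime_seven⟩

theorem paley_seven_not_transitive_above_zero (x y z : ZMod 7) (hx : paley (ZMod 7) 0 x)
    (hy : paley (ZMod 7) 0 y) (hz : paley (ZMod 7) 0 z) (hxy : paley (ZMod 7) x y)
    (hxz : paley (ZMod 7) x z) : ¬ paley (ZMod 7) y z := by
  revert x y z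
  unfold paley
  decide

theorem paley_seven_not_hasTT_four : ¬ HasTT 4 (paley (ZMod 7)) := by
  rintro ⟨e, -, he⟩
  have hshift (i j : Fin 4) (hij : i < j) : paley (ZMod 7) (e i - e 0) (e j - e 0) :=
    (paley_sub_sub _ _ _).mpr (he i j hij)
  have h0 (j : Fin 4) (hj : 0 < j) : paley (ZMod 7) 0 (e j - e 0) := sub_self (e 0) ▸ hshift 0 j hj
  exact paley_seven_not_transitive_above_zero _ _ _ (h0 1 (by decide)) (h0 2 (by decide))
    (h0 3 (by decide)) (hshift 1 2 (by decide)) (hshift 1 3 (by decide)) (hshift 2 3 (by decide))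

/-- There is a tournament on 7 vertices with no transitive subtournament on 4 vertices;
hence f(4) ≥ 8. -/
theorem stmt_15 :
    (∃ T : Fin 7 → Fin 7 → Prop, IsTournament T ∧ ¬ HasTT 4 T) ∧
    8 ≤ sInf {n : ℕ | ∀ T : Fin n → Fin n → Prop, IsTournament T → HasTT 4 T} := by
  have hpaley : IsTournament (paley (ZMod 7)) := paley_isTournament (by rw [ZMod.card])
  refine ⟨⟨paley (ZMod 7), hpaley, paley_seven_not_hasTT_four⟩, ?_⟩
  have hmem_eight : ∀ T : Fin 8 → Fin 8 → Prop, IsTournament T → HasTT 4 T := fun T hT =>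
    hT.hasTT_of_two_pow_le_card (k := 3) (by simp)
  refine le_csInf ⟨8, hmem_eight⟩ fun m hm => ?_
  by_contra! hm8
  have hinj : Injective (Fin.castLE (by omega : m ≤ 7)) := Fin.castLE_injective _
  exact paley_seven_not_hasTT_four (.of_comap hinj (hm _ (hpaley.comap hinj)))
end
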